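/- arXiv:1103.3877 — 5 statements merged into one kernel-verified Lean document; each statement's English description precedes it below -/
import Mathlib

section
/- Let A be a module over a commutative ring, and let d, δ : A → A be linear maps with d∘d = 0, δ∘δ = 0 and d∘δ + δ∘d = 0, satisfying the dδ-lemma: every x with d x = 0 and δ x = 0 that can be written as x = d y + δ z lies in the range of d∘δ. Then (i) for every x with d x = 0 there exists w such that δ(x + d w) = 0 (note d(x + d w) = 0 automatically), and (ii) every x with d x = 0 and δ x = 0 that lies in the range of d lies in the range of d∘δ. Consequently the inclusion of ker d ∩ ker δ into ker d induces a linear isomorphism (ker d ∩ ker δ)/range(d∘δ) ≅ ker d / range d. -/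
/-!
For `d`-closed `x`, the element `δ x` is `d`-closed (as `d δ = -δ d`), `δ`-closed and `δ`-exact,
so the `dδ`-lemma writes it as `d δ u`; then `x + d u` is `δ`-closed. Hence every `d`-class has a
`δ`-closed representative, which is surjectivity of `(ker d ∩ ker δ) / im dδ → ker d / im d`;
injectivity is the `dδ`-lemma applied to `d`-exact elements.
-/

namespace DDeltaLemma

open LinearMap Submodule

variable {R A : Type*} [CommRing R] [AddCommGroup A] [Module R A]

def Holds (d δ : A →ₗ[R] A) : Prop :=
  ∀ x : A, d x = 0 → δ x = 0 → (∃ y z : A, x = d y + δ z) → x ∈ range (d ∘ₗ δ)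

variable {d δ : A →ₗ[R] A}

lemma apply_apply_eq_zero_of_comp_eq_zero {f g : A →ₗ[R] A} (h : f ∘ₗ g = 0) (a : A) :
    f (g a) = 0 := by
  simpa using LinearMap.congr_fun h a

lemma apply_apply_eq_neg_of_anticommute (hanti : d ∘ₗ δ + δ ∘ₗ d = 0) (a : A) :
    δ (d a) = -d (δ a) :=
  eq_neg_of_add_eq_zero_right (by simpa using LinearMap.congr_fun hanti a)

lemma exists_map_add_eq_zero (hδδ : δ ∘ₗ δ = 0) (hanti : d ∘ₗ δ + δ ∘ₗ d = 0)
    (hdδ : Holds d δ) {x : A} (hx : d x = 0) : ∃ w : A, δ (x + d w) = 0 := by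
  have hdδx : d (δ x) = 0 := by
    rw [← neg_eq_zero, ← apply_apply_eq_neg_of_anticommute hanti, hx, map_zero]
  obtain ⟨u, hu⟩ := hdδ (δ x) hdδx (apply_apply_eq_zero_of_comp_eq_zero hδδ x) ⟨0, x, by simp⟩
  refine ⟨u, ?_⟩
  rw [map_add, apply_apply_eq_neg_of_anticommute hanti, ← comp_apply, hu, add_neg_cancel]

lemma mem_range_comp_of_mem_range (hdδ : Holds d δ) {x : A} (hdx : d x = 0) (hδx : δ x = 0)
    (hx : x ∈ range d) : x ∈ range (d ∘ₗ δ) := by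
  obtain ⟨y, rfl⟩ := hx
  exact hdδ _ hdx hδx ⟨y, 0, by simp⟩

variable (d δ) in
/-- `(ker d ∩ ker δ) / im (d ∘ δ)` is the Bott–Chern cohomology of `(A, d, δ)`. -/
def bottChernToCohomology :
    (↥(ker d ⊓ ker δ) ⧸ (range (d ∘ₗ δ)).comap (ker d ⊓ ker δ).subtype) →ₗ[R]
      (↥(ker d) ⧸ (range d).comap (ker d).subtype) :=
  mapQ _ _ (inclusion inf_le_left) fun _ hx => range_comp_le_range δ d hx

lemma bottChernToCohomology_mk (x : ↥(ker d ⊓ ker δ)) :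
    bottChernToCohomology d δ (Submodule.Quotient.mk x) = Submodule.Quotient.mk (inclusion inf_le_left x) :=
  rfl

lemma bottChernToCohomology_injective (hdδ : Holds d δ) :
    Function.Injective (bottChernToCohomology d δ) := by
  refine (injective_iff_map_eq_zero _).2 fun q hq => ?_
  obtain ⟨⟨x, hdx, hδx⟩, rfl⟩ := Submodule.Quotient.mk_surjective _ q
  rw [bottChernToCohomology_mk, Submodule.Quotient.mk_eq_zero] at hq
  exact (Submodule.Quotient.mk_eq_zero _).2 (mem_range_comp_of_mem_range hdδ hdx hδx hq)

lemma bottChernToCohomology_surjective (hdd : d ∘ₗ d = 0) (hδδ : δ ∘ₗ δ = 0)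
    (hanti : d ∘ₗ δ + δ ∘ₗ d = 0) (hdδ : Holds d δ) :
    Function.Surjective (bottChernToCohomology d δ) := by
  intro q
  obtain ⟨⟨x, hx⟩, rfl⟩ := Submodule.Quotient.mk_surjective _ q
  obtain ⟨w, hw⟩ := exists_map_add_eq_zero hδδ hanti hdδ hx
  have hdx : d (x + d w) = 0 := by
    rw [map_add, mem_ker.1 hx, apply_apply_eq_zero_of_comp_eq_zero hdd, add_zero]
  refine ⟨Submodule.Quotient.mk ⟨x + d w, hdx, hw⟩, ?_⟩
  rw [bottChernToCohomology_mk, Submodule.Quotient.eq]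
  exact ⟨w, by simp⟩

end DDeltaLemma

open DDeltaLemma in
/-- **dδ-lemma consequences, `d`-side.**
If `d, δ : A → A` are linear with `d ∘ d = 0`, `δ ∘ δ = 0`, `d ∘ δ + δ ∘ d = 0` and the
`dδ`-lemma holds, then (i) every `d`-closed `x` can be corrected by an exact term to become
`δ`-closed, (ii) every `d`- and `δ`-closed element of `range d` lies in `range (d ∘ δ)`, and
consequently the inclusion `ker d ⊓ ker δ ↪ ker d` induces a linear isomorphism
`(ker d ⊓ ker δ) / range (d ∘ δ) ≃ ker d / range d`. -/
theorem ddelta_lemma_d_side {R : Type*} [CommRing R] {A : Type*} [AddCommGroup A] [Module R A]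
    (d δ : A →ₗ[R] A)
    (hdd : d ∘ₗ d = 0) (hδδ : δ ∘ₗ δ = 0) (hanti : d ∘ₗ δ + δ ∘ₗ d = 0)
    (hlemma : ∀ x : A, d x = 0 → δ x = 0 → (∃ y z : A, x = d y + δ z) →
      x ∈ LinearMap.range (d ∘ₗ δ)) :
    (∀ x : A, d x = 0 → ∃ w : A, δ (x + d w) = 0) ∧
    (∀ x : A, d x = 0 → δ x = 0 → x ∈ LinearMap.range d → x ∈ LinearMap.range (d ∘ₗ δ)) ∧
    (∃ e : (↥(LinearMap.ker d ⊓ LinearMap.ker δ) ⧸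
              (LinearMap.range (d ∘ₗ δ)).comap (LinearMap.ker d ⊓ LinearMap.ker δ).subtype)
           ≃ₗ[R]
           (↥(LinearMap.ker d) ⧸ (LinearMap.range d).comap (LinearMap.ker d).subtype),
      ∀ x : ↥(LinearMap.ker d ⊓ LinearMap.ker δ),
        e (Submodule.Quotient.mk x) =
          Submodule.Quotient.mk (Submodule.inclusion inf_le_left x)) :=
  ⟨fun _ hx => exists_map_add_eq_zero hδδ hanti hlemma hx,
    fun _ => mem_range_comp_of_mem_range hlemma,
    LinearEquiv.ofBijective (bottChernToCohomology d δ)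
      ⟨bottChernToCohomology_injective hlemma,
        bottChernToCohomology_surjective hdd hδδ hanti hlemma⟩,
    bottChernToCohomology_mk⟩
end

section
/- Let A be a module over a commutative ring, and let d, δ : A → A be linear maps with d∘d = 0, δ∘δ = 0 and d∘δ + δ∘d = 0, satisfying the dδ-lemma: every x with d x = 0 and δ x = 0 that can be written as x = d y + δ z lies in the range of d∘δ. Then (i) for every x with δ x = 0 there exists w such that d(x + δ w) = 0, and (ii) every x with d x = 0 and δ x = 0 that lies in the range of δ lies in the range of d∘δ. Consequently the inclusion of ker d ∩ ker δ into ker δ induces a linear isomorphism (ker d ∩ ker δ)/range(d∘δ) ≅ ker δ / range δ. -/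
/-- **dδ-lemma consequences, `δ`-side.**
If `d, δ : A → A` are linear with `d ∘ d = 0`, `δ ∘ δ = 0`, `d ∘ δ + δ ∘ d = 0` and the
`dδ`-lemma holds, then (i) every `δ`-closed `x` can be corrected by a `δ`-exact term to become
`d`-closed, (ii) every `d`- and `δ`-closed element of `range δ` lies in `range (d ∘ δ)`, and
consequently the inclusion `ker d ⊓ ker δ ↪ ker δ` induces a linear isomorphism
`(ker d ⊓ ker δ) / range (d ∘ δ) ≃ ker δ / range δ`. -/
theorem ddelta_lemma_delta_side {R : Type*} [CommRing R] {A : Type*} [AddCommGroup A] [Module R A]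
    (d δ : A →ₗ[R] A)
    (hdd : d ∘ₗ d = 0) (hδδ : δ ∘ₗ δ = 0) (hanti : d ∘ₗ δ + δ ∘ₗ d = 0)
    (hlemma : ∀ x : A, d x = 0 → δ x = 0 → (∃ y z : A, x = d y + δ z) →
      x ∈ LinearMap.range (d ∘ₗ δ)) :
    (∀ x : A, δ x = 0 → ∃ w : A, d (x + δ w) = 0) ∧
    (∀ x : A, d x = 0 → δ x = 0 → x ∈ LinearMap.range δ → x ∈ LinearMap.range (d ∘ₗ δ)) ∧
    (∃ e : (↥(LinearMap.ker d ⊓ LinearMap.ker δ) ⧸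
              (LinearMap.range (d ∘ₗ δ)).comap (LinearMap.ker d ⊓ LinearMap.ker δ).subtype)
           ≃ₗ[R]
           (↥(LinearMap.ker δ) ⧸ (LinearMap.range δ).comap (LinearMap.ker δ).subtype),
      ∀ x : ↥(LinearMap.ker d ⊓ LinearMap.ker δ),
        e (Submodule.Quotient.mk x) =
          Submodule.Quotient.mk (Submodule.inclusion inf_le_right x)) := by
  have hanti' : ∀ y : A, d (δ y) + δ (d y) = 0 := by
    intro y
    have := LinearMap.ext_iff.mp hanti y
    simpa using this
  have hdd' : ∀ y : A, d (d y) = 0 := by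
    intro y; have := LinearMap.ext_iff.mp hdd y; simpa using this
  have hδδ' : ∀ y : A, δ (δ y) = 0 := by
    intro y; have := LinearMap.ext_iff.mp hδδ y; simpa using this
  have part1 : ∀ x : A, δ x = 0 → ∃ w : A, d (x + δ w) = 0 := by
    intro x hx
    have hδd : δ (d x) = 0 := by
      have h := hanti' x
      rw [hx] at h; simpa using h
    obtain ⟨y, hy⟩ := hlemma (d x) (hdd' x) hδd ⟨x, 0, by simp⟩
    refine ⟨-y, ?_⟩
    have : d (δ y) = d x := hy
    simp [map_neg, this]
  have part2 : ∀ x : A, d x = 0 → δ x = 0 → x ∈ LinearMap.range δ →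
      x ∈ LinearMap.range (d ∘ₗ δ) := by
    rintro x hdx hδx ⟨z, hz⟩
    exact hlemma x hdx hδx ⟨0, z, by simp [hz]⟩
  refine ⟨part1, part2, ?_⟩
  set N := (LinearMap.range (d ∘ₗ δ)).comap (LinearMap.ker d ⊓ LinearMap.ker δ).subtype with hN
  set K := (LinearMap.range δ).comap (LinearMap.ker δ).subtype with hK
  set f : ↥(LinearMap.ker d ⊓ LinearMap.ker δ) →ₗ[R] ↥(LinearMap.ker δ) ⧸ K :=
    K.mkQ ∘ₗ Submodule.inclusion inf_le_right with hf
  have hker : LinearMap.ker f = N := by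
    ext x
    have hx2 : δ (x : A) = 0 := x.2.2
    have hx1 : d (x : A) = 0 := x.2.1
    constructor
    · intro h
      have h' : Submodule.inclusion (inf_le_right (a := LinearMap.ker d)) x ∈ K := by
        have := h
        simpa [hf, Submodule.Quotient.mk_eq_zero] using this
      have hmem : (x : A) ∈ LinearMap.range δ := h'
      exact part2 x hx1 hx2 hmem
    · rintro ⟨y, hy⟩
      have hy' : d (δ y) = (x : A) := hy
      have hmem : Submodule.inclusion (inf_le_right (a := LinearMap.ker d)) x ∈ K := by
        refine ⟨-(d y), ?_⟩
        have h := hanti' y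
        rw [hy'] at h
        have h2 : δ (d y) = -(x : A) := by
          rw [add_comm] at h; exact eq_neg_of_add_eq_zero_left h
        have : δ (-(d y)) = (x : A) := by rw [map_neg, h2, neg_neg]
        exact this
      simpa [hf, Submodule.Quotient.mk_eq_zero] using hmem
  have hle : N ≤ LinearMap.ker f := hker.ge
  set g := N.liftQ f hle with hg
  have hinj : Function.Injective g :=
    LinearMap.ker_eq_bot.mp (Submodule.ker_liftQ_eq_bot _ _ _ hker.le)
  have hsurj : Function.Surjective g := by
    intro q
    obtain ⟨x, rfl⟩ := Submodule.mkQ_surjective K q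
    obtain ⟨w, hw⟩ := part1 (x : A) x.2
    have hδw : δ ((x : A) + δ w) = 0 := by simp [map_add, hδδ' w, x.2]
    refine ⟨Submodule.Quotient.mk ⟨(x : A) + δ w, ⟨hw, hδw⟩⟩, ?_⟩
    have : g (Submodule.Quotient.mk ⟨(x : A) + δ w, ⟨hw, hδw⟩⟩)
        = Submodule.Quotient.mk (Submodule.inclusion inf_le_right
            (⟨(x : A) + δ w, ⟨hw, hδw⟩⟩ : ↥(LinearMap.ker d ⊓ LinearMap.ker δ))) := rfl
    rw [this, Submodule.mkQ_apply, Submodule.Quotient.eq]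
    refine ⟨w, ?_⟩
    simp only [Submodule.coe_subtype, AddSubgroupClass.coe_sub, Submodule.inclusion]
    simp

  refine ⟨LinearEquiv.ofBijective g ⟨hinj, hsurj⟩, fun x => rfl⟩
end

section
/- Let E be a real normed vector space, let R : E → (E ≃L[ℝ] E) be a field of invertible continuous linear endomorphisms, and let X, Y : E → E be vector fields. Assume X, Y, R and the pointwise inverse field R⁻¹ (p ↦ R(p)⁻¹) are differentiable. Then for every x ∈ E, N_{R⁻¹}(X,Y)(x) = R(x)⁻¹ ( R(x)⁻¹ ( N_R(R⁻¹·X, R⁻¹·Y)(x) ) ), where R⁻¹·X denotes the vector field p ↦ R(p)⁻¹(X(p)) and N denotes the Nijenhuis tensor. -/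
open VectorField

/-- The vector field `S · X : p ↦ S p (X p)` obtained by applying a field of endomorphisms
`S` to a vector field `X`. -/
noncomputable def endApply {E : Type*} [NormedAddCommGroup E] [NormedSpace ℝ E]
    (S : E → (E →L[ℝ] E)) (X : E → E) : E → E :=
  fun p => S p (X p)

/-- The Nijenhuis tensor of a field of endomorphisms `S`:
`N_S(X,Y) = [S·X, S·Y] + S·(S·[X,Y]) − S·[S·X, Y] − S·[X, S·Y]`. -/
noncomputable def nijenhuis {E : Type*} [NormedAddCommGroup E] [NormedSpace ℝ E]
    (S : E → (E →L[ℝ] E)) (X Y : E → E) : E → E :=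
  lieBracket ℝ (endApply S X) (endApply S Y)
    + endApply S (endApply S (lieBracket ℝ X Y))
    - endApply S (lieBracket ℝ (endApply S X) Y)
    - endApply S (lieBracket ℝ X (endApply S Y))

/-- For an invertible field of endomorphisms `R`,
`N_{R⁻¹}(X,Y) = R⁻² N_R(R⁻¹·X, R⁻¹·Y)`. -/
theorem nijenhuis_inv {E : Type*} [NormedAddCommGroup E] [NormedSpace ℝ E]
    (R : E → (E ≃L[ℝ] E)) (X Y : E → E)
    (hX : Differentiable ℝ X) (hY : Differentiable ℝ Y)
    (hR : Differentiable ℝ (fun p => (R p : E →L[ℝ] E)))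
    (hRinv : Differentiable ℝ (fun p => ((R p).symm : E →L[ℝ] E))) (x : E) :
    nijenhuis (fun p => ((R p).symm : E →L[ℝ] E)) X Y x =
      (R x).symm ((R x).symm
        (nijenhuis (fun p => (R p : E →L[ℝ] E))
          (endApply (fun p => ((R p).symm : E →L[ℝ] E)) X)
          (endApply (fun p => ((R p).symm : E →L[ℝ] E)) Y) x)) := by
  have key : ∀ Z : E → E,
      endApply (fun p => (R p : E →L[ℝ] E)) (endApply (fun p => ((R p).symm : E →L[ℝ] E)) Z) = Z :=
    fun Z => funext fun p => (R p).apply_symm_apply (Z p)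
  simp only [nijenhuis, key]
  simp only [Pi.add_apply, Pi.sub_apply, endApply, map_add, map_sub,
    ContinuousLinearEquiv.coe_coe, ContinuousLinearEquiv.symm_apply_apply]
  abel
end

section
/- Let λ₁, …, λ_m be m distinct positive real numbers, and let P ∈ ℂ[X] be a polynomial of degree at most 2m−1 such that P(i·λ_j) = i and P(−i·λ_j) = −i for every j = 1, …, m (here i is the imaginary unit). Then all coefficients of P are real, and P is odd: every coefficient of P in even degree vanishes (equivalently, P(−X) = −P(X)). -/
open Polynomial Complex

lemma coeff_comp_neg_X' {R : Type*} [CommRing R] (p : R[X]) (n : ℕ) :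
    (p.comp (-X)).coeff n = (-1) ^ n * p.coeff n := by
  induction p using Polynomial.induction_on' with
  | add p q hp hq => simp [add_comp, hp, hq, mul_add]
  | monomial k a =>
    rw [monomial_comp, neg_pow, show ((-1 : R[X]) ^ k) = C ((-1) ^ k) by simp,
      mul_left_comm, coeff_C_mul, coeff_C_mul, coeff_X_pow, coeff_monomial]
    by_cases h : k = n
    · subst h; simp [mul_comm]
    · simp [h, Ne.symm h]

/-- Let `λ₁, …, λ_m` be `m ≥ 1` distinct positive real numbers and let `P ∈ ℂ[X]` be a
polynomial of degree at most `2m − 1` with `P(i λ_j) = i` and `P(−i λ_j) = −i` for all `j`.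
Then all coefficients of `P` are real, and `P` is odd (all coefficients in even degree
vanish). -/
theorem interpolating_polynomial_real_and_odd {m : ℕ} (hm : 0 < m)
    (lam : Fin m → ℝ) (hinj : Function.Injective lam) (hpos : ∀ j, 0 < lam j)
    (P : ℂ[X]) (hdeg : P.degree ≤ (2 * m - 1 : ℕ))
    (hval : ∀ j : Fin m, P.eval (Complex.I * (lam j : ℂ)) = Complex.I)
    (hval' : ∀ j : Fin m, P.eval (-(Complex.I * (lam j : ℂ))) = -Complex.I) :
    (∀ n : ℕ, (P.coeff n).im = 0) ∧ (∀ n : ℕ, Even n → P.coeff n = 0) := by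
  -- the interpolation points, indexed by `Fin m ⊕ Fin m`
  set f : Fin m ⊕ Fin m → ℂ := fun x =>
    Sum.elim (fun j => Complex.I * (lam j : ℂ)) (fun j => -(Complex.I * (lam j : ℂ))) x with hf
  have hfinj : Function.Injective f := by
    intro x y hxy
    have him : ∀ z, (f z).im = Sum.elim (fun j => lam j) (fun j => -(lam j)) z := by
      rintro (j | j) <;> simp [hf]
    have h2 := congrArg Complex.im hxy
    rw [him, him] at h2
    rcases x with j | j <;> rcases y with k | k
    · simp only [Sum.inl.injEq]
      exact hinj (by simpa using h2)
    · exfalso; simp at h2; nlinarith [hpos j, hpos k]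
    · exfalso; simp at h2; nlinarith [hpos j, hpos k]
    · simp only [Sum.elim_inr, neg_inj] at h2
      simp only [Sum.inr.injEq]
      exact hinj h2
  have hcard : Fintype.card (Fin m ⊕ Fin m) = 2 * m := by simp [two_mul]
  have hPnd : P.natDegree < 2 * m := by
    have h1 : P.natDegree ≤ 2 * m - 1 := natDegree_le_iff_degree_le.2 hdeg
    omega
  -- generic uniqueness argument
  have key : ∀ Q : ℂ[X], Q.natDegree < 2 * m →
      (∀ j : Fin m, Q.eval (Complex.I * (lam j : ℂ)) = Complex.I) →
      (∀ j : Fin m, Q.eval (-(Complex.I * (lam j : ℂ))) = -Complex.I) → P = Q := by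
    intro Q hQnd hQv hQv'
    have hz : P - Q = 0 := by
      apply eq_zero_of_natDegree_lt_card_of_eval_eq_zero (P - Q) hfinj
      · rintro (j | j) <;>
          simp [hf, eval_sub, hval j, hval' j, hQv j, hQv' j]
      · rw [hcard]
        exact lt_of_le_of_lt (natDegree_sub_le P Q) (by omega)
    exact sub_eq_zero.mp hz
  -- Relation 1: P equals its conjugate polynomial, so coefficients are real
  have hconj : P = P.map (starRingEnd ℂ) := by
    apply key
    · rw [natDegree_map]; exact hPnd
    · intro j
      have h1 : Complex.I * (lam j : ℂ) = (starRingEnd ℂ) (-(Complex.I * (lam j : ℂ))) := by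
        simp [Complex.ext_iff]
      rw [eval_map, h1, eval₂_at_apply, hval' j]
      simp
    · intro j
      have h1 : -(Complex.I * (lam j : ℂ)) = (starRingEnd ℂ) (Complex.I * (lam j : ℂ)) := by
        simp [Complex.ext_iff]
      rw [eval_map, h1, eval₂_at_apply, hval j]
      simp
  have hreal : ∀ n : ℕ, (P.coeff n).im = 0 := by
    intro n
    have := congrArg (fun q => q.coeff n) hconj
    simp only [coeff_map] at this
    have him := congrArg Complex.im this
    simp only [Complex.conj_im] at him
    linarith
  -- Relation 2: P(-X) = -P, so even coefficients vanish
  have hodd : P = -(P.comp (-X)) := by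
    apply key
    · rw [natDegree_neg]
      refine lt_of_le_of_lt (natDegree_comp_le) ?_
      simpa using hPnd
    · intro j
      simp [eval_comp, hval' j]
    · intro j
      simp [eval_comp, hval j]
  refine ⟨hreal, fun n hn => ?_⟩
  have := congrArg (fun q => q.coeff n) hodd
  simp only [coeff_neg, coeff_comp_neg_X', hn.neg_one_pow, one_mul] at this
  linear_combination this / 2
end

section
/- Let V be a finite-dimensional real inner product space and R : V →ₗ[ℝ] V a bijective linear map that is skew-adjoint with respect to the inner product: ⟪R u, v⟫ = −⟪u, R v⟫ for all u, v. Then there exists an odd polynomial P ∈ ℝ[X] (all coefficients in even degree vanish) such that J := P(R) satisfies: (i) J∘J = −id; (ii) J is orthogonal, ⟪J u, J v⟫ = ⟪u, v⟫ for all u, v; (iii) the operator S := −R∘J is self-adjoint and positive definite; and (iv) R = S∘J. In other words, the orthogonal factor of the polar decomposition of R is an odd real polynomial in R and is a complex structure on V. -/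
/-!
`A := -R² = Rᵀ R` is symmetric and positive definite, so Lagrange interpolation on its finitely
many (positive) eigenvalues gives a polynomial `Q` with `B := Q(A) = A^(-1/4)`. Then
`J := R B² = R Q(-R²)²` is an odd polynomial in `R`. As `B` commutes with `R`,
`J² = R² B⁴ = -A B⁴ = -1`, and `J` is skew, hence orthogonal. Finally `S := -R J = A B² = B A B`;
taking the fourth root rather than the square root makes positivity of `S` a consequence of that
of `A`.
-/

open RealInnerProductSpace Polynomial

namespace Polynomial

theorem coeff_X_mul_comp_neg_X_sq_of_even {R : Type*} [CommRing R] (q : R[X]) {n : ℕ}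
    (hn : Even n) : (X * q.comp (-X ^ 2)).coeff n = 0 := by
  have hq : q.comp (-X ^ 2) = expand R 2 (q.comp (-X)) := by
    rw [expand_eq_comp_X_pow, comp_assoc, neg_comp, X_comp]
  rcases n with _ | m
  · exact coeff_X_mul_zero _
  · have hm : ¬ 2 ∣ m := by rw [← even_iff_two_dvd]; exact Nat.even_add_one.mp hn
    rw [coeff_X_mul, hq, coeff_expand two_pos, if_neg hm]

theorem commute_aeval_neg_mul_self {R A : Type*} [CommRing R] [Ring A] [Algebra R A] (r : A)
    (p : R[X]) : Commute r (aeval (-(r * r)) p) := by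
  have h : aeval (-(r * r)) p = aeval r (p.comp (-X ^ 2)) := by
    rw [aeval_comp, map_neg, map_pow, aeval_X, sq]
  simpa [h] using (Commute.all X (p.comp (-X ^ 2))).map (aeval r)

end Polynomial

theorem Commute.mul_sq_mul_self_eq_neg_one {α : Type*} [Ring α] {r b : α} (h : Commute r b)
    (hb : -(r * r) * b ^ 4 = 1) : r * b ^ 2 * (r * b ^ 2) = -1 := by
  rw [(h.pow_right 2).symm.mul_mul_mul_comm, ← pow_add, ← neg_neg (r * r * _), ← neg_mul, hb]

namespace LinearMap

theorem IsSymmetric.aeval_eq_aeval_of_eval_eq {𝕜 E : Type*} [RCLike 𝕜] [NormedAddCommGroup E]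
    [InnerProductSpace 𝕜 E] [FiniteDimensional 𝕜 E] {T : E →ₗ[𝕜] E} (hT : T.IsSymmetric)
    {p q : 𝕜[X]} (hpq : ∀ μ, Module.End.HasEigenvalue T μ → p.eval μ = q.eval μ) :
    aeval T p = aeval T q := by
  refine (hT.eigenvectorBasis rfl).toBasis.ext fun i => ?_
  have hv := hT.hasEigenvector_eigenvectorBasis rfl i
  rw [OrthonormalBasis.coe_toBasis, Module.End.aeval_apply_of_hasEigenvector hv,
    Module.End.aeval_apply_of_hasEigenvector hv,
    hpq _ (Module.End.hasEigenvalue_of_hasEigenvector hv)]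

variable {E : Type*} [NormedAddCommGroup E] [InnerProductSpace ℝ E]

def IsSkewSymmetric (T : E →ₗ[ℝ] E) : Prop :=
  ∀ u v, ⟪T u, v⟫ = -⟪u, T v⟫

theorem IsSymmetric.aeval {T : E →ₗ[ℝ] E} (hT : T.IsSymmetric) (p : ℝ[X]) :
    (aeval T p).IsSymmetric := by
  induction p using Polynomial.induction_on' with
  | add p q hp hq => rw [map_add]; exact hp.add hq
  | monomial n a =>
    rw [aeval_monomial, ← Algebra.smul_def]
    exact (hT.pow n).smul (star_trivial a)

theorem IsSymmetric.inner_conj_apply_pos {A B : E →ₗ[ℝ] E}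
    (hA : ∀ u ≠ 0, 0 < ⟪A u, u⟫) (hB : B.IsSymmetric) (hB₀ : Function.Injective B) {u : E}
    (hu : u ≠ 0) : 0 < ⟪(B * A * B) u, u⟫ := by
  rw [Module.End.mul_apply, Module.End.mul_apply, hB]
  exact hA _ ((map_ne_zero_iff B hB₀).mpr hu)

theorem IsSymmetric.exists_polynomial_mul_aeval_pow_eq_one [FiniteDimensional ℝ E]
    {A : E →ₗ[ℝ] E} (hA : A.IsSymmetric) (hA₀ : ∀ u ≠ 0, 0 < ⟪A u, u⟫) {m : ℕ} (hm : m ≠ 0) :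
    ∃ Q : ℝ[X], A * Polynomial.aeval A Q ^ m = 1 := by
  classical
  set Q := Lagrange.interpolate (Module.End.finite_hasEigenvalue A).toFinset (_root_.id : ℝ → ℝ)
    fun μ => (μ ^ (m⁻¹ : ℝ))⁻¹
  refine ⟨Q, ?_⟩
  suffices Polynomial.aeval A (X * Q ^ m) = Polynomial.aeval A (1 : ℝ[X]) by
    rwa [map_mul, map_pow, aeval_X, map_one] at this
  refine hA.aeval_eq_aeval_of_eval_eq fun μ hμ => ?_
  have hμ₀ : 0 < μ := by
    obtain ⟨v, hv⟩ := hμ.exists_hasEigenvector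
    have hv₀ := hA₀ v hv.2
    rw [hv.apply_eq_smul, real_inner_smul_left, real_inner_self_eq_norm_sq] at hv₀
    exact pos_of_mul_pos_left hv₀ (sq_nonneg _)
  have hQμ : Q.eval μ = (μ ^ (m⁻¹ : ℝ))⁻¹ :=
    Lagrange.eval_interpolate_at_node (fun μ : ℝ => (μ ^ (m⁻¹ : ℝ))⁻¹) (Set.injOn_id _)
      ((Module.End.finite_hasEigenvalue A).mem_toFinset.mpr hμ)
  rw [eval_mul, eval_pow, eval_X, eval_one, hQμ, inv_pow, Real.rpow_inv_natCast_pow hμ₀.le hm,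
    mul_inv_cancel₀ hμ₀.ne']

namespace IsSkewSymmetric

variable {R : E →ₗ[ℝ] E} (hR : R.IsSkewSymmetric)
include hR

theorem isSymmetric_neg_mul_self : (-(R * R)).IsSymmetric := fun u v => by
  simp only [neg_apply, Module.End.mul_apply, inner_neg_left, inner_neg_right, hR (R u), hR u,
    neg_neg]

theorem inner_neg_mul_self_apply_pos (hR₀ : Function.Injective R) {u : E} (hu : u ≠ 0) :
    0 < ⟪(-(R * R)) u, u⟫ := by
  rw [neg_apply, Module.End.mul_apply, inner_neg_left, hR, neg_neg, real_inner_self_eq_norm_sq]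
  exact pow_pos (norm_pos_iff.mpr ((map_ne_zero_iff R hR₀).mpr hu)) 2

theorem mul_of_commute {B : E →ₗ[ℝ] E} (hB : B.IsSymmetric) (hRB : Commute R B) :
    (R * B).IsSkewSymmetric := fun u v => by
  rw [Module.End.mul_apply, hR, hB, ← Module.End.mul_apply, hRB.eq, Module.End.mul_apply]

theorem inner_map_map_of_mul_self_eq_neg_one (hRR : R * R = -1) (u v : E) :
    ⟪R u, R v⟫ = ⟪u, v⟫ := by
  rw [hR, ← Module.End.mul_apply, hRR, neg_apply, Module.End.one_apply, inner_neg_right, neg_neg]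

end IsSkewSymmetric

end LinearMap

/-- **Polar decomposition of a bijective skew-adjoint operator via an odd polynomial.**
If `R` is a bijective skew-adjoint endomorphism of a finite-dimensional real inner product
space, then there is an odd real polynomial `P` such that `J := P(R)` satisfies `J ∘ J = −id`,
`J` is orthogonal, `S := −R ∘ J` is self-adjoint and positive definite, and `R = S ∘ J`. -/
theorem polar_decomposition_skew_adjoint
    {V : Type*} [NormedAddCommGroup V] [InnerProductSpace ℝ V] [FiniteDimensional ℝ V]
    (R : V →ₗ[ℝ] V) (hbij : Function.Bijective R)
    (hskew : ∀ u v : V, ⟪R u, v⟫ = -⟪u, R v⟫) :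
    ∃ P : ℝ[X], (∀ n : ℕ, Even n → P.coeff n = 0) ∧
      (aeval R P) ∘ₗ (aeval R P) = -LinearMap.id ∧
      (∀ u v : V, ⟪aeval R P u, aeval R P v⟫ = ⟪u, v⟫) ∧
      (∀ u v : V, ⟪(-(R ∘ₗ aeval R P)) u, v⟫ = ⟪u, (-(R ∘ₗ aeval R P)) v⟫) ∧
      (∀ u : V, u ≠ 0 → 0 < ⟪(-(R ∘ₗ aeval R P)) u, u⟫) ∧
      R = (-(R ∘ₗ aeval R P)) ∘ₗ (aeval R P) := by
  have hR : R.IsSkewSymmetric := hskew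
  set A := -(R * R)
  have hA : A.IsSymmetric := hR.isSymmetric_neg_mul_self
  have hA₀ : ∀ u ≠ 0, 0 < ⟪A u, u⟫ := fun _ => hR.inner_neg_mul_self_apply_pos hbij.1
  obtain ⟨Q, hQ⟩ := hA.exists_polynomial_mul_aeval_pow_eq_one hA₀ four_ne_zero
  set B := aeval A Q
  have hB : B.IsSymmetric := hA.aeval Q
  have hRB : Commute R B := commute_aeval_neg_mul_self R Q
  have hAB : Commute A B := by simpa using (Commute.all X Q).map (aeval A)
  have hB₀ : Function.Injective B := LinearMap.injective_of_comp_eq_id B (A * B ^ 3) <| by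
    rw [← Module.End.mul_eq_comp, mul_assoc, ← pow_succ, hQ, Module.End.one_eq_id]
  set J := R * B ^ 2
  have hJ : aeval R (X * (Q ^ 2).comp (-X ^ 2)) = J := by
    rw [map_mul, aeval_X, aeval_comp, map_pow, map_neg, map_pow, aeval_X, sq R]
  have hJJ : J * J = -1 := hRB.mul_sq_mul_self_eq_neg_one hQ
  have hS : -(R * J) = A * B ^ 2 := by rw [← mul_assoc, neg_mul]
  refine ⟨X * (Q ^ 2).comp (-X ^ 2), fun n hn => coeff_X_mul_comp_neg_X_sq_of_even _ hn,
    ?_, ?_, ?_, ?_, ?_⟩ <;> rw [hJ]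
  · exact hJJ
  · exact (hR.mul_of_commute (hB.pow 2) (hRB.pow_right 2)).inner_map_map_of_mul_self_eq_neg_one hJJ
  · change (-(R * J)).IsSymmetric
    rw [hS]
    exact hA.mul_of_commute (hB.pow 2) (hAB.pow_right 2)
  · intro u hu
    change 0 < ⟪(-(R * J)) u, u⟫
    rw [hS, sq, ← mul_assoc, hAB.eq]
    exact hB.inner_conj_apply_pos hA₀ hB₀ hu
  · change R = -(R * J) * J
    rw [neg_mul, mul_assoc, hJJ, mul_neg_one, neg_neg]
end
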